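/- Assume hypotheses (H1)–(H3) for a smooth Hamiltonian H on the slow–fast phase space M = ℝ^{2r} × ℝ^{2k}, with momentum map J satisfying the adiabatic condition ⟨d₁J⟩ = 0. Then the identity (1/ω) d₁H − d₁J = (1/ω)⟨d₁H⟩ holds between 1-forms on M. -/

import Mathlib

open Real MeasureTheory Asymptotics Set

noncomputable section

/-- Fast factor `ℝ^{2r}` with variables `(y, x)`. -/
abbrev Fast (r : ℕ) := (Fin r → ℝ) × (Fin r → ℝ)

/-- Slow factor `ℝ^{2k}` with variables `(p, q)`. -/
abbrev Slow (k : ℕ) := (Fin k → ℝ) × (Fin k → ℝ)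

/-- The slow-fast phase space `M = ℝ^{2r} × ℝ^{2k}`. -/
abbrev SF (r k : ℕ) := Fast r × Slow k

/-- The fast Hamiltonian vector field `X_H^{(0)}`: `ẏ = -∂H/∂x`, `ẋ = ∂H/∂y`,
zero slow components. -/
def fastVF {r k : ℕ} (H : SF r k → ℝ) (m : SF r k) : SF r k :=
  ((fun i => -(fderiv ℝ H m ((0, Pi.single i 1), 0)),
    fun i => fderiv ℝ H m ((Pi.single i 1, 0), 0)), 0)

/-- The slow Hamiltonian vector field `X_H^{(1)}`: `ṗ = -∂H/∂q`, `q̇ = ∂H/∂p`,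
zero fast components. -/
def slowVF {r k : ℕ} (H : SF r k → ℝ) (m : SF r k) : SF r k :=
  (0, (fun j => -(fderiv ℝ H m (0, (0, Pi.single j 1))),
       fun j => fderiv ℝ H m (0, (Pi.single j 1, 0))))

/-- The differential of `f` in the slow variables only, `d₁f`, as a 1-form. -/
def d1Form {r k : ℕ} (f : SF r k → ℝ) (m w : SF r k) : ℝ :=
  fderiv ℝ f m ((0 : Fast r), w.2)

/-- Average `⟨α⟩` of a 1-form `α` along a `2π`-periodic flow `φ`:
`⟨α⟩_m(w) = (1/2π)∫₀^{2π} α_{φ(t,m)}(D_mφ(t,·) w) dt`. -/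
def avg1 {r k : ℕ} (φ : ℝ → SF r k → SF r k) (α : SF r k → SF r k → ℝ)
    (m w : SF r k) : ℝ :=
  (1 / (2 * π)) * ∫ t in (0:ℝ)..(2 * π), α (φ t m) (fderiv ℝ (φ t) m w)

/-- Integrating operator `S(α)` on a 1-form `α` along a `2π`-periodic flow `φ`. -/
def intOp1 {r k : ℕ} (φ : ℝ → SF r k → SF r k) (α : SF r k → SF r k → ℝ)
    (m w : SF r k) : ℝ :=
  (1 / (2 * π)) * ∫ t in (0:ℝ)..(2 * π), (t - π) * α (φ t m) (fderiv ℝ (φ t) m w)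

/-! The fast flow `φ` preserves `H` (as `dH(X_H^{(0)}) = 0`), `J` (as `d₀J = ω⁻¹ d₀H`) and `ω`:
differentiating `d₀J = ω⁻¹ d₀H` and using the symmetry of `D²J` and `D²H` gives
`d₀H(u) d(ω⁻¹)(u') = d₀H(u') d(ω⁻¹)(u)` for fast `u, u'`, and taking `u' = X_H^{(0)}` forces
`d(ω⁻¹)(X_H^{(0)}) = 0`. Since the fast parts of `dJ` and `ω⁻¹ dH` agree,
`d₁J - ω⁻¹ d₁H = dJ - ω⁻¹ dH`, and the latter is `φ_t`-invariant by the chain rule. Averaging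
over `t` and using `⟨d₁J⟩ = 0` gives the identity. -/

section FlowCalculus

variable {E F : Type*} [NormedAddCommGroup E] [NormedSpace ℝ E]
  [NormedAddCommGroup F] [NormedSpace ℝ F]

theorem comp_flow_eq_of_fderiv_apply_eq_zero {φ : ℝ → E → E} {V : E → E} {f : E → F}
    (hf : Differentiable ℝ f) (hφ : ∀ t x, HasDerivAt (fun s => φ s x) (V (φ t x)) t)
    (hV : ∀ x, fderiv ℝ f x (V x) = 0) (t : ℝ) (x : E) : f (φ t x) = f (φ 0 x) := by
  have hderiv (s : ℝ) : HasDerivAt (fun s => f (φ s x)) 0 s := by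
    simpa [Function.comp_def, hV] using (hf _).hasFDerivAt.comp_hasDerivAt s (hφ s x)
  exact is_const_of_deriv_eq_zero (fun s => (hderiv s).differentiableAt)
    (fun s => (hderiv s).deriv) t 0

theorem fderiv_apply_fderiv_eq_of_comp_eq {f : E → F} {g : E → E} {x : E}
    (hf : DifferentiableAt ℝ f (g x)) (hg : DifferentiableAt ℝ g x) (hfg : f ∘ g = f)
    (v : E) :
    fderiv ℝ f (g x) (fderiv ℝ g x v) = fderiv ℝ f x v := by
  rw [← ContinuousLinearMap.comp_apply, ← fderiv_comp x hf hg, hfg]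

theorem fderiv_mul_fderiv_comm_of_fderiv_eq_mul {J H W : E → ℝ} {s : Set E}
    (hJ : ContDiff ℝ 2 J) (hH : ContDiff ℝ 2 H) (hW : Differentiable ℝ W)
    (hJH : ∀ x, ∀ v ∈ s, fderiv ℝ J x v = W x * fderiv ℝ H x v) (x : E) {u u' : E}
    (hu : u ∈ s) (hu' : u' ∈ s) :
    fderiv ℝ H x u * fderiv ℝ W x u' = fderiv ℝ H x u' * fderiv ℝ W x u := by
  have hJ' := (hJ.fderiv_right (m := 1) le_rfl).differentiable one_ne_zero x
  have hH' := (hH.fderiv_right (m := 1) le_rfl).differentiable one_ne_zero x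
  have hsymmJ := hJ.contDiffAt.isSymmSndFDerivAt (x := x) (by simp)
  have hsymmH := hH.contDiffAt.isSymmSndFDerivAt (x := x) (by simp)
  have hdiff {v : E} (hv : v ∈ s) (v' : E) :
      fderiv ℝ (fderiv ℝ J) x v' v =
        W x * fderiv ℝ (fderiv ℝ H) x v' v + fderiv ℝ H x v * fderiv ℝ W x v' := by
    have hfun : (fun y => fderiv ℝ J y v) = fun y => W y * fderiv ℝ H y v :=
      funext fun y => hJH y v hv
    have hJv :
        HasFDerivAt (fun y => fderiv ℝ J y v) ((fderiv ℝ (fderiv ℝ J) x).flip v) x := by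
      simpa using hJ'.hasFDerivAt.clm_apply (hasFDerivAt_const v x)
    have hHv :
        HasFDerivAt (fun y => fderiv ℝ H y v) ((fderiv ℝ (fderiv ℝ H) x).flip v) x := by
      simpa using hH'.hasFDerivAt.clm_apply (hasFDerivAt_const v x)
    rw [hfun] at hJv
    simpa [mul_comm] using
      congrArg (· v') (hJv.unique ((hW x).hasFDerivAt.mul hHv))
  have h1 := hdiff hu u'
  have h2 := hdiff hu' u
  rw [hsymmJ, hsymmH] at h1
  linarith

end FlowCalculus

section SlowFast

variable {r k : ℕ}

theorem apply_fast_eq_sum (L : SF r k →L[ℝ] ℝ) (y x : Fin r → ℝ) :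
    L ((y, x), 0) =
      ∑ i, (y i * L ((Pi.single i 1, 0), 0) + x i * L ((0, Pi.single i 1), 0)) := by
  have hdecomp : (((y, x), 0) : SF r k) =
      ∑ i, (y i • (((Pi.single i 1, 0), 0) : SF r k) + x i • ((0, Pi.single i 1), 0)) := by
    ext j <;> simp [Prod.fst_sum, Prod.snd_sum, Finset.sum_apply, Pi.single_apply]
  rw [hdecomp, map_sum]
  simp only [map_add, map_smul, smul_eq_mul]

theorem fderiv_apply_fastVF_self (H : SF r k → ℝ) (m : SF r k) :
    fderiv ℝ H m (fastVF H m) = 0 := by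
  rw [fastVF, apply_fast_eq_sum]
  exact Finset.sum_eq_zero fun i _ => by ring

theorem fastVF_eq_zero_of_fderiv_eq_zero {H : SF r k → ℝ} {m : SF r k}
    (h : ∀ v : SF r k, v.2 = 0 → fderiv ℝ H m v = 0) : fastVF H m = 0 := by
  ext <;> simp [fastVF, h]

theorem fderiv_apply_fastVF_eq_zero_of_comm {H W : SF r k → ℝ} {m : SF r k}
    (h : ∀ v v' : SF r k, v.2 = 0 → v'.2 = 0 →
      fderiv ℝ H m v * fderiv ℝ W m v' = fderiv ℝ H m v' * fderiv ℝ W m v) :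
    fderiv ℝ W m (fastVF H m) = 0 := by
  by_contra hne
  have hH : ∀ v : SF r k, v.2 = 0 → fderiv ℝ H m v = 0 := fun v hv => by
    have := h v (fastVF H m) hv rfl
    rw [fderiv_apply_fastVF_self, zero_mul] at this
    exact (mul_eq_zero.1 this).resolve_right hne
  exact hne (by rw [fastVF_eq_zero_of_fderiv_eq_zero hH, map_zero])

theorem d1Form_sub_mul_d1Form_eq {J H : SF r k → ℝ} {y : SF r k} {c : ℝ}
    (h : ∀ u : Fast r, fderiv ℝ J y (u, 0) = c * fderiv ℝ H y (u, 0)) (q : SF r k) :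
    d1Form J y q - c * d1Form H y q = fderiv ℝ J y q - c * fderiv ℝ H y q := by
  have hq : q = (q.1, 0) + (0, q.2) := by simp
  conv_rhs => rw [hq, map_add, map_add, h]
  simp only [d1Form]
  ring

theorem d1Form_sub_mul_d1Form_comp_eq {J H : SF r k → ℝ} {g : SF r k → SF r k} {x : SF r k}
    {c : ℝ} (hJ : Differentiable ℝ J) (hH : Differentiable ℝ H) (hg : DifferentiableAt ℝ g x)
    (hJg : J ∘ g = J) (hHg : H ∘ g = H)
    (hx : ∀ u : Fast r, fderiv ℝ J x (u, 0) = c * fderiv ℝ H x (u, 0))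
    (hgx : ∀ u : Fast r, fderiv ℝ J (g x) (u, 0) = c * fderiv ℝ H (g x) (u, 0)) (v : SF r k) :
    d1Form J (g x) (fderiv ℝ g x v) - c * d1Form H (g x) (fderiv ℝ g x v) =
      d1Form J x v - c * d1Form H x v := by
  rw [d1Form_sub_mul_d1Form_eq hgx, d1Form_sub_mul_d1Form_eq hx,
    fderiv_apply_fderiv_eq_of_comp_eq (hJ _) hg hJg,
    fderiv_apply_fderiv_eq_of_comp_eq (hH _) hg hHg]

theorem avg1_eq_add_mul_avg1 {φ : ℝ → SF r k → SF r k} {α β : SF r k → SF r k → ℝ}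
    {m w : SF r k} {a c : ℝ} (hβ : Continuous fun t => β (φ t m) (fderiv ℝ (φ t) m w))
    (h : ∀ t, α (φ t m) (fderiv ℝ (φ t) m w) - c * β (φ t m) (fderiv ℝ (φ t) m w) = a) :
    avg1 φ α m w = a + c * avg1 φ β m w := by
  have hα : (fun t => α (φ t m) (fderiv ℝ (φ t) m w)) =
      fun t => a + c * β (φ t m) (fderiv ℝ (φ t) m w) :=
    funext fun t => by linarith [h t]
  simp only [avg1, hα]
  rw [intervalIntegral.integral_add intervalIntegrable_const
      ((hβ.intervalIntegrable _ _).const_mul c),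
    intervalIntegral.integral_const, intervalIntegral.integral_const_mul]
  field_simp
  ring

theorem continuous_d1Form_flow {H : SF r k → ℝ} {φ : ℝ → SF r k → SF r k}
    (hH : ContDiff ℝ 1 H) (hφ : ContDiff ℝ 1 (fun p : ℝ × SF r k => φ p.1 p.2))
    (m w : SF r k) : Continuous fun t => d1Form H (φ t m) (fderiv ℝ (φ t) m w) := by
  have hφm : Continuous fun t => φ t m :=
    hφ.continuous.comp (continuous_id.prodMk continuous_const)
  have hDφ : Continuous fun t => fderiv ℝ (φ t) m :=
    (hφ.fderiv (n := 0) contDiff_const le_rfl).continuous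
  exact ((hH.continuous_fderiv one_ne_zero).comp hφm).clm_apply
    (continuous_const.prodMk (hDφ.clm_apply continuous_const).snd)

theorem comp_flow_eq_self {H ω : SF r k → ℝ} {φ : ℝ → SF r k → SF r k}
    {F : Type*} [NormedAddCommGroup F] [NormedSpace ℝ F]
    (hφ0 : ∀ m, φ 0 m = m)
    (hφ' : ∀ t m, HasDerivAt (fun s => φ s m) ((ω (φ t m))⁻¹ • fastVF H (φ t m)) t)
    {f : SF r k → F} (hf : Differentiable ℝ f) (hfX : ∀ x, fderiv ℝ f x (fastVF H x) = 0)
    (t : ℝ) (m : SF r k) : f (φ t m) = f m := by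
  simpa [hφ0] using comp_flow_eq_of_fderiv_apply_eq_zero
    (V := fun x => (ω x)⁻¹ • fastVF H x) hf hφ' (by simp [hfX]) t m

end SlowFast

theorem stmt6_general {r k : ℕ} (H : SF r k → ℝ) (hH : ContDiff ℝ (⊤ : ℕ∞) H)
    (ω : SF r k → ℝ) (hω_smooth : ContDiff ℝ (⊤ : ℕ∞) ω) (hω_pos : ∀ m, 0 < ω m)
    (φ : ℝ → SF r k → SF r k)
    (hφ_smooth : ContDiff ℝ (⊤ : ℕ∞) (fun p : ℝ × SF r k => φ p.1 p.2))
    (hφ0 : ∀ m, φ 0 m = m)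
    (hφ' : ∀ t m, HasDerivAt (fun s => φ s m) ((ω (φ t m))⁻¹ • fastVF H (φ t m)) t)
    (J : SF r k → ℝ) (hJ_smooth : ContDiff ℝ (⊤ : ℕ∞) J)
    (hH2 : ∀ m (u : Fast r),
      fderiv ℝ J m (u, (0 : Slow k)) = (1 / ω m) * fderiv ℝ H m (u, 0))
    (hH3 : ∀ m w, avg1 φ (d1Form J) m w = 0) :
    ∀ m w, (1 / ω m) * d1Form H m w - d1Form J m w =
      (1 / ω m) * avg1 φ (d1Form H) m w := by
  intro m w
  have hHd : Differentiable ℝ H := hH.differentiable (by simp)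
  have hJd : Differentiable ℝ J := hJ_smooth.differentiable (by simp)
  have hW : ContDiff ℝ (⊤ : ℕ∞) fun x => (ω x)⁻¹ := hω_smooth.inv fun x => (hω_pos x).ne'
  have hJW : ∀ x, ∀ v ∈ {v : SF r k | v.2 = 0},
      fderiv ℝ J x v = (ω x)⁻¹ * fderiv ℝ H x v := by
    rintro x ⟨u, _⟩ rfl
    simpa using hH2 x u
  have hWX (x : SF r k) : fderiv ℝ (fun y => (ω y)⁻¹) x (fastVF H x) = 0 :=
    fderiv_apply_fastVF_eq_zero_of_comm fun _ _ hv hv' =>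
      fderiv_mul_fderiv_comm_of_fderiv_eq_mul (hJ_smooth.of_le (by norm_cast))
        (hH.of_le (by norm_cast)) (hW.differentiable (by simp)) hJW x hv hv'
  have hωφ (t : ℝ) (x : SF r k) : ω (φ t x) = ω x :=
    inv_injective (comp_flow_eq_self hφ0 hφ' (hW.differentiable (by simp)) hWX t x)
  have hJφ (t : ℝ) : J ∘ φ t = J := funext <| comp_flow_eq_self hφ0 hφ' hJd
    (fun x => by rw [hJW x _ rfl, fderiv_apply_fastVF_self, mul_zero]) t
  have hHφ (t : ℝ) : H ∘ φ t = H :=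
    funext <| comp_flow_eq_self hφ0 hφ' hHd (fderiv_apply_fastVF_self H) t
  have hφt (t : ℝ) : DifferentiableAt ℝ (φ t) m :=
    (hφ_smooth.comp (contDiff_const.prodMk contDiff_id)).differentiable (by simp) m
  have havg := avg1_eq_add_mul_avg1 (α := d1Form J)
    (continuous_d1Form_flow (hH.of_le (by norm_cast)) (hφ_smooth.of_le (by norm_cast)) m w)
    fun t => d1Form_sub_mul_d1Form_comp_eq hJd hHd (hφt t) (hJφ t) (hHφ t) (hH2 m)
      (by simpa [hωφ] using hH2 (φ t m)) w
  rw [hH3] at havg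
  linarith

/-- Under hypotheses (H1)-(H3), the identity
`(1/ω) d₁H - d₁J = (1/ω)⟨d₁H⟩` holds between 1-forms on `M`. -/
theorem stmt6 {r k : ℕ} (H : SF r k → ℝ) (hH : ContDiff ℝ (⊤ : ℕ∞) H)
    (ω : SF r k → ℝ) (hω_smooth : ContDiff ℝ (⊤ : ℕ∞) ω) (hω_pos : ∀ m, 0 < ω m)
    (φ : ℝ → SF r k → SF r k)
    (hφ_smooth : ContDiff ℝ (⊤ : ℕ∞) (fun p : ℝ × SF r k => φ p.1 p.2))
    (hφ0 : ∀ m, φ 0 m = m)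
    (hφ' : ∀ t m, HasDerivAt (fun s => φ s m) ((ω (φ t m))⁻¹ • fastVF H (φ t m)) t)
    (hper : ∀ t m, φ (t + 2 * π) m = φ t m)
    (J : SF r k → ℝ) (hJ_smooth : ContDiff ℝ (⊤ : ℕ∞) J)
    (hH2 : ∀ m (u : Fast r),
      fderiv ℝ J m (u, (0 : Slow k)) = (1 / ω m) * fderiv ℝ H m (u, 0))
    (hH3 : ∀ m w, avg1 φ (d1Form J) m w = 0) :
    ∀ m w, (1 / ω m) * d1Form H m w - d1Form J m w =
      (1 / ω m) * avg1 φ (d1Form H) m w :=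
  stmt6_general H hH ω hω_smooth hω_pos φ hφ_smooth hφ0 hφ' J hJ_smooth hH2 hH3
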